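/- arXiv:1202.5688 — 3 statements merged into one kernel-verified Lean document; each statement's English description precedes it below -/
import Mathlib

section
/- Under the hypothesis that Φ_i^T P_j Φ_i - P_i is negative definite for all i, j in a finite set Λ, with each P_i positive definite, every trajectory of the switched system Γ(k+1) = Φ_{σ(k)} Γ(k) converges to zero as k → ∞, for any switching signal σ : ℕ → Λ. -/
/-!
The quadratic form `V k = Γ kᵀ P_{σ k} Γ k` is a common Lyapunov function along every switching
signal: `V k - V (k + 1) = Γ kᵀ (P_{σ k} - Φ_{σ k}ᵀ P_{σ (k+1)} Φ_{σ k}) Γ k`, and by compactness of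
the unit sphere, together with finiteness of `Λ × Λ`, these finitely many positive definite forms
dominate a common `c ‖x‖²`. Hence the nonnegative sequence `V` pays at least `c ‖Γ k‖²` at each
step, so `∑ ‖Γ k‖²` is finite and `‖Γ k‖ → 0`.
-/

open Matrix Filter

theorem exists_pos_mul_norm_sq_le {E : Type*} [NormedAddCommGroup E] [NormedSpace ℝ E]
    [FiniteDimensional ℝ E] (f : E → ℝ) (hf : Continuous f)
    (hf_smul : ∀ (t : ℝ) (x : E), f (t • x) = t ^ 2 * f x) (hf_pos : ∀ x ≠ 0, 0 < f x) :
    ∃ c > 0, ∀ x, c * ‖x‖ ^ 2 ≤ f x := by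
  have hf_zero : f 0 = 0 := by simpa using hf_smul 0 0
  cases subsingleton_or_nontrivial E
  · exact ⟨1, one_pos, fun x => by simp [Subsingleton.elim x 0, hf_zero]⟩
  obtain ⟨u, hu, hu_min⟩ := (isCompact_sphere (0 : E) 1).exists_isMinOn
    (NormedSpace.sphere_nonempty.mpr zero_le_one) hf.continuousOn
  have hu_norm : ‖u‖ = 1 := mem_sphere_zero_iff_norm.mp hu
  refine ⟨f u, hf_pos u (norm_ne_zero_iff.mp (by simp [hu_norm])), fun x => ?_⟩
  rcases eq_or_ne x 0 with rfl | hx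
  · simp [hf_zero]
  have hx_norm : ‖x‖ ≠ 0 := norm_ne_zero_iff.mpr hx
  have h_unit : ‖‖x‖⁻¹ • x‖ = 1 := by simp [norm_smul, hx_norm]
  calc f u * ‖x‖ ^ 2 ≤ f (‖x‖⁻¹ • x) * ‖x‖ ^ 2 := by
        gcongr
        exact hu_min (mem_sphere_zero_iff_norm.mpr h_unit)
    _ = f x := by rw [hf_smul]; field_simp

theorem exists_pos_forall_mul_norm_sq_le_dotProduct_mulVec {α ι : Type*} [Finite α] [Fintype ι]
    (M : α → Matrix ι ι ℝ) (hM : ∀ a, ∀ x : ι → ℝ, x ≠ 0 → 0 < x ⬝ᵥ M a *ᵥ x) :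
    ∃ c > 0, ∀ a (x : EuclideanSpace ℝ ι), c * ‖x‖ ^ 2 ≤ x.ofLp ⬝ᵥ M a *ᵥ x.ofLp := by
  have h_each : ∀ a, ∃ c > 0, ∀ x : EuclideanSpace ℝ ι, c * ‖x‖ ^ 2 ≤ x.ofLp ⬝ᵥ M a *ᵥ x.ofLp :=
    fun a => exists_pos_mul_norm_sq_le _ (by fun_prop)
      (fun t x => by simp only [WithLp.ofLp_smul, mulVec_smul, smul_dotProduct, dotProduct_smul,
          smul_eq_mul]; ring)
      (fun x hx => hM a _ (by simpa using hx))
  choose c hc_pos hc using h_each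
  obtain ⟨m, hm⟩ := Finite.exists_ge (fun a => (⟨c a, hc_pos a⟩ : {r : ℝ // 0 < r}))
  refine ⟨m, m.2, fun a x => le_trans ?_ (hc a x)⟩
  exact mul_le_mul_of_nonneg_right (show (m : ℝ) ≤ c a from hm a) (sq_nonneg _)

theorem summable_of_succ_add_le {u a : ℕ → ℝ} (hu : ∀ k, 0 ≤ u k) (ha : ∀ k, 0 ≤ a k)
    (h : ∀ k, u (k + 1) + a k ≤ u k) : Summable a := by
  have h_telescope : ∀ N, u N + ∑ k ∈ Finset.range N, a k ≤ u 0 := by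
    intro N
    induction N with
    | zero => simp
    | succ N ih => rw [Finset.sum_range_succ]; linarith [h N]
  exact summable_of_sum_range_le ha fun N => by linarith [h_telescope N, hu N]

theorem dotProduct_mulVec_conj {ι κ R : Type*} [Fintype ι] [Fintype κ] [CommSemiring R]
    (A : Matrix κ ι R) (B : Matrix κ κ R) (x : ι → R) :
    (A *ᵥ x) ⬝ᵥ B *ᵥ (A *ᵥ x) = x ⬝ᵥ (Aᵀ * B * A) *ᵥ x := by
  simp [← mulVec_mulVec, dotProduct_mulVec, vecMul_transpose]

theorem switched_system_asymptotic_stability_general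
    {n : ℕ} {Λ : Type*} [Fintype Λ]
    (Φ : Λ → Matrix (Fin n) (Fin n) ℝ)
    (P : Λ → Matrix (Fin n) (Fin n) ℝ)
    (hP : ∀ i, (P i).PosDef)
    (hLMI : ∀ i j, ∀ x : Fin n → ℝ, x ≠ 0 →
      x ⬝ᵥ ((Φ i)ᵀ * P j * Φ i - P i) *ᵥ x < 0)
    (σ : ℕ → Λ) (Γ : ℕ → EuclideanSpace ℝ (Fin n))
    (hΓ : ∀ k, Γ (k + 1) = Φ (σ k) *ᵥ Γ k) :
    Tendsto (fun k => ‖Γ k‖) atTop (nhds 0) := by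
  obtain ⟨c, hc, h_decay⟩ := exists_pos_forall_mul_norm_sq_le_dotProduct_mulVec
    (fun ij : Λ × Λ => P ij.1 - (Φ ij.1)ᵀ * P ij.2 * Φ ij.1) fun ij x hx => by
      simpa [sub_mulVec] using hLMI ij.1 ij.2 x hx
  set V : ℕ → ℝ := fun k => (Γ k).ofLp ⬝ᵥ P (σ k) *ᵥ (Γ k).ofLp
  have hV_nonneg : ∀ k, 0 ≤ V k := fun k => by
    simpa using (hP (σ k)).posSemidef.dotProduct_mulVec_nonneg (Γ k).ofLp
  have hV_step : ∀ k, V (k + 1) + c * ‖Γ k‖ ^ 2 ≤ V k := fun k => by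
    have h_gap := h_decay (σ k, σ (k + 1)) (Γ k)
    simp only [sub_mulVec, dotProduct_sub] at h_gap
    simp only [V, hΓ k, dotProduct_mulVec_conj]
    linarith
  have h_sq : Tendsto (fun k => ‖Γ k‖ ^ 2) atTop (nhds 0) := by
    simpa [hc.ne'] using ((summable_of_succ_add_le hV_nonneg
      (fun k => by positivity) hV_step).tendsto_atTop_zero).const_mul c⁻¹
  simpa using h_sq.sqrt

theorem switched_system_asymptotic_stability
    {n : ℕ} {Λ : Type*} [Fintype Λ] [Nonempty Λ]
    (Φ : Λ → Matrix (Fin n) (Fin n) ℝ)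
    (P : Λ → Matrix (Fin n) (Fin n) ℝ)
    (hP : ∀ i, (P i).PosDef)
    (hLMI : ∀ i j, ∀ x : Fin n → ℝ, x ≠ 0 →
      x ⬝ᵥ ((Φ i)ᵀ * P j * Φ i - P i) *ᵥ x < 0)
    (σ : ℕ → Λ) (Γ : ℕ → EuclideanSpace ℝ (Fin n))
    (hΓ : ∀ k, Γ (k + 1) = Φ (σ k) *ᵥ Γ k) :
    Tendsto (fun k => ‖Γ k‖) atTop (nhds 0) :=
  switched_system_asymptotic_stability_general Φ P hP hLMI σ Γ hΓ
end

section
/- Suppose Φ_i^T P_j Φ_i ≺ P_i (in the Loewner order, i.e., P_i - Φ_i^T P_j Φ_i is positive definite) for all i, j in a finite set Λ, with each P_i positive definite. Then each matrix Φ_i is Schur stable: Φ_i^k → 0 as k → ∞. -/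
/-!
With `Q = P - Aᵀ P A`, the quadratic form `V x = xᵀ P x` is nonnegative and drops by exactly
`(A^k x)ᵀ Q (A^k x)` from `A^k x` to `A^(k+1) x`. A nonnegative nonincreasing sequence converges,
so these drops tend to `0`; as `Q` is positive definite, this forces `A^k x → 0` for every `x`,
that is, `A^k → 0`.
-/

open Matrix Filter Topology

lemma tendsto_sub_succ_zero_of_antitone {v : ℕ → ℝ} (hv : Antitone v)
    (hb : BddBelow (Set.range v)) : Tendsto (fun k => v k - v (k + 1)) atTop (𝓝 0) := by
  have h := tendsto_atTop_ciInf hv hb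
  simpa using h.sub (h.comp (tendsto_add_atTop_nat 1))

namespace Matrix

lemma tendsto_zero_of_forall_mulVec {α m n R : Type*} [Fintype n] [DecidableEq n]
    [NonAssocSemiring R] [TopologicalSpace R] {l : Filter α} {M : α → Matrix m n R}
    (h : ∀ x, Tendsto (fun a => M a *ᵥ x) l (𝓝 0)) : Tendsto M l (𝓝 0) := by
  refine tendsto_pi_nhds.mpr fun i => tendsto_pi_nhds.mpr fun j => ?_
  simpa [mulVec_single, Function.comp_def] using
    ((continuous_apply i).tendsto 0).comp (h (Pi.single j 1))

section

variable {ι : Type*} [Fintype ι]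

lemma PosDef.exists_pos_mul_norm_sq_le {M : Matrix ι ι ℝ} (hM : M.PosDef) :
    ∃ c > 0, ∀ x : ι → ℝ, c * ‖x‖ ^ 2 ≤ x ⬝ᵥ M *ᵥ x := by
  rcases isEmpty_or_nonempty ι with _ | _
  · exact ⟨1, one_pos, fun x => by simp [Subsingleton.elim x 0]⟩
  set q : (ι → ℝ) → ℝ := fun x => x ⬝ᵥ M *ᵥ x with hq
  have hq_cont : Continuous q :=
    continuous_id.dotProduct (continuous_const.matrix_mulVec continuous_id)
  obtain ⟨y, hy, hmin⟩ := (isCompact_sphere (0 : ι → ℝ) 1).exists_isMinOn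
    (NormedSpace.sphere_nonempty.mpr zero_le_one) hq_cont.continuousOn
  have hy0 : y ≠ 0 := ne_zero_of_mem_unit_sphere ⟨y, hy⟩
  refine ⟨q y, by simpa using hM.dotProduct_mulVec_pos hy0, fun x => ?_⟩
  rcases eq_or_ne x 0 with rfl | hx
  · simp [hq]
  have hsmul : q (‖x‖⁻¹ • x) = (‖x‖⁻¹) ^ 2 * q x := by
    simp only [hq, mulVec_smul, dotProduct_smul, smul_dotProduct, smul_eq_mul]
    ring
  have hle : q y ≤ q (‖x‖⁻¹ • x) := hmin (by
    rw [mem_sphere_zero_iff_norm, norm_smul, norm_inv, norm_norm,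
      inv_mul_cancel₀ (norm_ne_zero_iff.mpr hx)])
  calc q y * ‖x‖ ^ 2 ≤ q (‖x‖⁻¹ • x) * ‖x‖ ^ 2 := by gcongr
    _ = q x := by rw [hsmul]; field_simp

lemma PosDef.tendsto_zero_of_tendsto_dotProduct_mulVec {α : Type*} {l : Filter α}
    {M : Matrix ι ι ℝ} (hM : M.PosDef) {y : α → ι → ℝ}
    (h : Tendsto (fun a => y a ⬝ᵥ M *ᵥ y a) l (𝓝 0)) : Tendsto y l (𝓝 0) := by
  obtain ⟨c, hc, hcM⟩ := hM.exists_pos_mul_norm_sq_le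
  have hsq : Tendsto (fun a => ‖y a‖ ^ 2) l (𝓝 0) :=
    squeeze_zero (fun _ => by positivity) (fun a => (le_div_iff₀' hc).mpr (hcM (y a)))
      (by simpa using h.div_const c)
  rw [tendsto_zero_iff_norm_tendsto_zero]
  simpa using hsq.sqrt

lemma dotProduct_sub_transpose_mul_mul_mulVec {R : Type*} [CommRing R] (A P : Matrix ι ι R)
    (x : ι → R) :
    x ⬝ᵥ (P - Aᵀ * P * A) *ᵥ x = x ⬝ᵥ P *ᵥ x - (A *ᵥ x) ⬝ᵥ P *ᵥ (A *ᵥ x) := by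
  rw [sub_mulVec, dotProduct_sub, ← mulVec_mulVec, ← mulVec_mulVec, dotProduct_mulVec x Aᵀ,
    vecMul_transpose]

theorem tendsto_pow_mulVec_atTop_nhds_zero_of_lyapunov [DecidableEq ι] {A P : Matrix ι ι ℝ}
    (hP : P.PosSemidef) (hL : (P - Aᵀ * P * A).PosDef) (x : ι → ℝ) :
    Tendsto (fun k : ℕ => (A ^ k) *ᵥ x) atTop (𝓝 0) := by
  set y : ℕ → ι → ℝ := fun k => (A ^ k) *ᵥ x
  set V : ℕ → ℝ := fun k => y k ⬝ᵥ P *ᵥ y k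
  have hdrop : ∀ k, V k - V (k + 1) = y k ⬝ᵥ (P - Aᵀ * P * A) *ᵥ y k := fun k => by
    simp only [V, y, dotProduct_sub_transpose_mul_mul_mulVec, pow_succ', ← mulVec_mulVec]
  have hV_nonneg : ∀ k, 0 ≤ V k := fun k => by simpa using hP.dotProduct_mulVec_nonneg (y k)
  have hV_anti : Antitone V := antitone_nat_of_succ_le fun k => by
    have := hL.posSemidef.dotProduct_mulVec_nonneg (y k)
    simp only [star_trivial] at this
    linarith [hdrop k]
  refine hL.tendsto_zero_of_tendsto_dotProduct_mulVec ?_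
  simpa only [hdrop] using
    tendsto_sub_succ_zero_of_antitone hV_anti ⟨0, Set.forall_mem_range.mpr hV_nonneg⟩

theorem tendsto_pow_atTop_nhds_zero_of_lyapunov [DecidableEq ι] {A P : Matrix ι ι ℝ}
    (hP : P.PosSemidef) (hL : (P - Aᵀ * P * A).PosDef) :
    Tendsto (fun k : ℕ => A ^ k) atTop (𝓝 0) :=
  tendsto_zero_of_forall_mulVec (tendsto_pow_mulVec_atTop_nhds_zero_of_lyapunov hP hL)

end

end Matrix

theorem lmi_implies_schur_stable_general
    {n : ℕ} {Λ : Type*}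
    (Φ : Λ → Matrix (Fin n) (Fin n) ℝ)
    (P : Λ → Matrix (Fin n) (Fin n) ℝ)
    (hP : ∀ i, (P i).PosDef)
    (hLMI : ∀ i j, (P i - (Φ i)ᵀ * P j * Φ i).PosDef) :
    ∀ i, Tendsto (fun k => Φ i ^ k) atTop (nhds 0) :=
  fun i => tendsto_pow_atTop_nhds_zero_of_lyapunov (hP i).posSemidef (hLMI i i)

theorem lmi_implies_schur_stable
    {n : ℕ} {Λ : Type*} [Fintype Λ] [Nonempty Λ]
    (Φ : Λ → Matrix (Fin n) (Fin n) ℝ)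
    (P : Λ → Matrix (Fin n) (Fin n) ℝ)
    (hP : ∀ i, (P i).PosDef)
    (hLMI : ∀ i j, (P i - (Φ i)ᵀ * P j * Φ i).PosDef) :
    ∀ i, Tendsto (fun k => Φ i ^ k) atTop (nhds 0) :=
  lmi_implies_schur_stable_general Φ P hP hLMI
end

section
/- If the spectral radius of the real n×n matrix M is strictly less than 1, then there exists a symmetric positive definite matrix P such that M^T P M - P is negative definite (a discrete Lyapunov equation solution exists, e.g., P = Σ_{k≥0} (M^T)^k M^k). -/
/-!
Complexify `M`: every point of its spectrum has modulus `< 1`, so by Gelfand's formula some power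
`M ^ N` with `N ≥ 1` is a strict contraction for the Euclidean operator norm. The truncated sum
`P = ∑_{k<N} (M ^ k)ᵀ M ^ k` is then positive definite (its `k = 0` term is `1`), and it telescopes:
`Mᵀ P M - P = (M ^ N)ᵀ M ^ N - 1`, whose quadratic form `‖M ^ N x‖² - ‖x‖²` is negative for `x ≠ 0`.
-/

open Matrix Filter
open scoped Matrix.Norms.L2Operator

lemma eventually_norm_pow_lt_one {A : Type*} [NormedRing A] [NormedAlgebra ℂ A] [CompleteSpace A]
    {a : A} (ha : ∀ μ ∈ spectrum ℂ a, ‖μ‖ < 1) : ∀ᶠ N in atTop, ‖a ^ N‖ < 1 := by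
  cases subsingleton_or_nontrivial A
  · simp [Subsingleton.elim _ (0 : A)]
  have hρ : spectralRadius ℂ a < 1 := by
    exact_mod_cast spectrum.spectralRadius_lt_of_forall_lt a (r := 1) fun μ hμ => by
      exact_mod_cast ha μ hμ
  filter_upwards [(spectrum.pow_norm_pow_one_div_tendsto_nhds_spectralRadius a).eventually_lt_const
    hρ, eventually_ne_atTop 0] with N hN hN0
  rw [ENNReal.ofReal_lt_one, one_div] at hN
  rw [← Real.rpow_inv_natCast_pow (norm_nonneg _) hN0]
  exact pow_lt_one₀ (by positivity) hN hN0

lemma norm_toLp_ofReal {ι : Type*} [Fintype ι] (x : ι → ℝ) :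
    ‖WithLp.toLp 2 (fun i => (x i : ℂ))‖ = ‖WithLp.toLp 2 x‖ := by
  simp [EuclideanSpace.norm_eq]

lemma dotProduct_self_eq_norm_sq {ι : Type*} [Fintype ι] (x : ι → ℝ) :
    x ⬝ᵥ x = ‖WithLp.toLp 2 x‖ ^ 2 := by
  rw [← real_inner_self_eq_norm_sq]
  rfl

namespace Matrix

lemma l2_opNorm_le_l2_opNorm_map_algebraMap {m n : Type*} [Fintype m] [Fintype n] [DecidableEq n]
    (B : Matrix m n ℝ) : ‖B‖ ≤ ‖B.map (algebraMap ℝ ℂ)‖ := by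
  rw [l2_opNorm_def]
  refine ContinuousLinearMap.opNorm_le_bound _ (norm_nonneg _) fun x => ?_
  have hmap : B.map (algebraMap ℝ ℂ) *ᵥ (fun i => (x i : ℂ)) = fun i => ((B *ᵥ x.ofLp) i : ℂ) :=
    funext fun i => ((algebraMap ℝ ℂ).map_mulVec B x.ofLp i).symm
  have h := l2_opNorm_mulVec (B.map (algebraMap ℝ ℂ)) (WithLp.toLp 2 (fun i => (x i : ℂ)))
  rw [EuclideanSpace.equiv, PiLp.coe_symm_continuousLinearEquiv, hmap, norm_toLp_ofReal,
    norm_toLp_ofReal, WithLp.toLp_ofLp] at h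
  exact h

variable {ι : Type*} [Fintype ι] [DecidableEq ι]

lemma dotProduct_transpose_mul_self_sub_one_mulVec_neg {B : Matrix ι ι ℝ} (hB : ‖B‖ < 1)
    {x : ι → ℝ} (hx : x ≠ 0) : x ⬝ᵥ (Bᵀ * B - 1) *ᵥ x < 0 := by
  rw [sub_mulVec, one_mulVec, dotProduct_sub, ← mulVec_mulVec, dotProduct_mulVec, vecMul_transpose,
    sub_neg, dotProduct_self_eq_norm_sq, dotProduct_self_eq_norm_sq]
  have hx' : 0 < ‖WithLp.toLp 2 x‖ := by simpa using hx
  have hBx : ‖WithLp.toLp 2 (B *ᵥ x)‖ < ‖WithLp.toLp 2 x‖ :=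
    calc ‖WithLp.toLp 2 (B *ᵥ x)‖ ≤ ‖B‖ * ‖WithLp.toLp 2 x‖ := l2_opNorm_mulVec B _
      _ < ‖WithLp.toLp 2 x‖ := mul_lt_of_lt_one_left hx' hB
  gcongr

def lyapunovSum (M : Matrix ι ι ℝ) (N : ℕ) : Matrix ι ι ℝ :=
  ∑ k ∈ Finset.range N, (M ^ k)ᵀ * M ^ k

lemma posDef_lyapunovSum (M : Matrix ι ι ℝ) {N : ℕ} (hN : N ≠ 0) : (lyapunovSum M N).PosDef := by
  obtain ⟨N, rfl⟩ := Nat.exists_eq_succ_of_ne_zero hN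
  rw [lyapunovSum, Finset.sum_range_succ', pow_zero, transpose_one, one_mul]
  refine PosDef.posSemidef_add (posSemidef_sum _ fun k _ => ?_) PosDef.one
  simpa only [conjTranspose_eq_transpose_of_trivial] using
    posSemidef_conjTranspose_mul_self (M ^ (k + 1))

lemma transpose_mul_lyapunovSum_mul_sub (M : Matrix ι ι ℝ) (N : ℕ) :
    Mᵀ * lyapunovSum M N * M - lyapunovSum M N = (M ^ N)ᵀ * M ^ N - 1 := by
  have hstep (k : ℕ) : Mᵀ * ((M ^ k)ᵀ * M ^ k) * M = (M ^ (k + 1))ᵀ * M ^ (k + 1) := by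
    rw [pow_succ, transpose_mul, Matrix.mul_assoc, Matrix.mul_assoc, Matrix.mul_assoc]
  rw [lyapunovSum, Finset.mul_sum, Finset.sum_mul, Finset.sum_congr rfl fun k _ => hstep k,
    ← Finset.sum_sub_distrib, Finset.sum_range_sub (fun k => (M ^ k)ᵀ * M ^ k), pow_zero,
    transpose_one, one_mul]

end Matrix

theorem spectral_radius_lt_one_lyapunov_exists
    {n : ℕ} (M : Matrix (Fin n) (Fin n) ℝ)
    (hspec : ∀ μ : ℂ, (M.map (algebraMap ℝ ℂ)).charpoly.IsRoot μ → ‖μ‖ < 1) :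
    ∃ P : Matrix (Fin n) (Fin n) ℝ, P.PosDef ∧
      ∀ x : Fin n → ℝ, x ≠ 0 → x ⬝ᵥ (Mᵀ * P * M - P) *ᵥ x < 0 := by
  have hspectrum : ∀ μ ∈ spectrum ℂ (M.map (algebraMap ℝ ℂ)), ‖μ‖ < 1 :=
    fun μ hμ => hspec μ (mem_spectrum_iff_isRoot_charpoly.mp hμ)
  obtain ⟨N, hN, hN0⟩ :=
    ((eventually_norm_pow_lt_one hspectrum).and (eventually_ne_atTop 0)).exists
  have hMN : ‖M ^ N‖ < 1 := by
    refine (l2_opNorm_le_l2_opNorm_map_algebraMap _).trans_lt ?_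
    rwa [Matrix.map_pow]
  refine ⟨lyapunovSum M N, posDef_lyapunovSum M hN0, fun x hx => ?_⟩
  rw [transpose_mul_lyapunovSum_mul_sub]
  exact dotProduct_transpose_mul_self_sub_one_mulVec_neg hMN hx
end
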